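/- arXiv:1304.5831 — 3 statements merged into one kernel-verified Lean document; each statement's English description precedes it below -/
import Mathlib

section
/- Let (f,g) ∈ 𝒞 with unique minimal set K. If J is a nonempty open interval with J ⊆ int(R_f ∩ R_g), then J ∩ K = ∅. -/
open Set Function MeasureTheory

noncomputable section

namespace IFSPaper

/-- The closed unit interval `I = [0,1]` as a subset of `ℝ`. -/
def unitI : Set ℝ := Set.Icc 0 1

/-- Membership in the class `𝒜`: `f, g : I → I` are `C¹` diffeomorphisms onto their
images with `f 0 = 0`, `g 1 = 1`, `f x < x < g x` on `(0,1)` and `0 < g 0 < f 1 < 1`. -/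
structure MemA (f g : ℝ → ℝ) : Prop where
  f_maps : Set.MapsTo f unitI unitI
  g_maps : Set.MapsTo g unitI unitI
  f_c1 : ContDiff ℝ 1 f
  g_c1 : ContDiff ℝ 1 g
  f_inj : Set.InjOn f unitI
  g_inj : Set.InjOn g unitI
  f_deriv_ne : ∀ x ∈ unitI, deriv f x ≠ 0
  g_deriv_ne : ∀ x ∈ unitI, deriv g x ≠ 0
  f_zero : f 0 = 0
  g_one : g 1 = 1
  f_lt_id : ∀ x ∈ Set.Ioo (0:ℝ) 1, f x < x
  id_lt_g : ∀ x ∈ Set.Ioo (0:ℝ) 1, x < g x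
  g0_pos : 0 < g 0
  g0_lt_f1 : g 0 < f 1
  f1_lt_one : f 1 < 1

/-- The element of the semigroup `⟨f,g⟩₊` associated to a word in the two generators
(`true ↦ f`, `false ↦ g`). -/
def word (f g : ℝ → ℝ) : List Bool → ℝ → ℝ
  | [] => id
  | b :: t => (if b then f else g) ∘ word f g t

/-- The semigroup orbit `O₊(x) = {φ x : φ ∈ ⟨f,g⟩₊}` of a point `x`. -/
def orbitP (f g : ℝ → ℝ) (x : ℝ) : Set ℝ :=
  {y | ∃ w : List Bool, w ≠ [] ∧ word f g w x = y}

/-- `K` is a minimal set for the action of `⟨f,g⟩₊` on `I`. -/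
def IsMinimalSet (f g : ℝ → ℝ) (K : Set ℝ) : Prop :=
  K.Nonempty ∧ K ⊆ unitI ∧ ∀ x ∈ K, closure (orbitP f g x) = K

/-- The overlapping region `W = [g 0, f 1]`. -/
def ovW (f g : ℝ → ℝ) : Set ℝ := Set.Icc (g 0) (f 1)

/-- The fundamental domain `Fₙ = [f^[n+1] 1, f^[n] 1]`. -/
def Fint (f : ℝ → ℝ) (n : ℕ) : Set ℝ := Set.Icc (f^[n+1] 1) (f^[n] 1)

/-- The fundamental domain `Gₙ = [g^[n] 0, g^[n+1] 0]`. -/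
def Gint (g : ℝ → ℝ) (n : ℕ) : Set ℝ := Set.Icc (g^[n] 0) (g^[n+1] 0)

/-- Single overlapping property `So`: `f² 1 < g 0` and `f 1 < g² 0`. -/
def So (f g : ℝ → ℝ) : Prop := f (f 1) < g 0 ∧ f 1 < g (g 0)

/-- A (nonempty) closed bounded interval. -/
def IsClosedInterval (A : Set ℝ) : Prop := ∃ a b : ℝ, a ≤ b ∧ A = Set.Icc a b

/-- A closed bounded interval with nonempty interior. -/
def IsNondegClosedInterval (A : Set ℝ) : Prop := ∃ a b : ℝ, a < b ∧ A = Set.Icc a b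

/-- A nonempty open bounded interval. -/
def IsOpenInterval (J : Set ℝ) : Prop := ∃ a b : ℝ, a < b ∧ J = Set.Ioo a b

/-- Hole property `Ho` witnessed by the pair of holes `(Hf, Hg)`. -/
def HoleAt (f g : ℝ → ℝ) (Hf Hg : Set ℝ) : Prop :=
  IsNondegClosedInterval Hf ∧ IsNondegClosedInterval Hg ∧
  Hf ⊆ interior (Fint f 1 \ ovW f g) ∧
  Hg ⊆ interior (Gint g 1 \ ovW f g) ∧
  g '' Hf = Hg ∧ f '' Hg = Hf

/-- Hole property `Ho`. -/
def Ho (f g : ℝ → ℝ) : Prop := ∃ Hf Hg : Set ℝ, HoleAt f g Hf Hg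

/-- The induced (first-return) map `𝓕 : F₁ \ {f 1} → G₁`,
`𝓕 x = g^[-n x] (f⁻¹ x)` where `n x` is least with `g^[-n x] (f⁻¹ x) ∈ G₁`. -/
def calF (f g : ℝ → ℝ) (x : ℝ) : ℝ :=
  (Function.invFunOn g unitI)^[sInf {n : ℕ |
      (Function.invFunOn g unitI)^[n] (Function.invFunOn f unitI x) ∈ Gint g 1}]
    (Function.invFunOn f unitI x)

/-- The induced (first-return) map `𝓖 : G₁ \ {g 0} → F₁`. -/
def calG (f g : ℝ → ℝ) (x : ℝ) : ℝ :=
  (Function.invFunOn f unitI)^[sInf {n : ℕ |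
      (Function.invFunOn f unitI)^[n] (Function.invFunOn g unitI x) ∈ Fint f 1}]
    (Function.invFunOn g unitI x)

/-- Eventual expansion property `Ee`: `𝓕` is uniformly expanding outside `Hf`
and `𝓖` outside `Hg` (at all points where the derivative makes sense). -/
def Ee (f g : ℝ → ℝ) (Hf Hg : Set ℝ) : Prop :=
  ∃ μ : ℝ, 1 < μ ∧
    (∀ y ∈ Fint f 1 \ Hf, DifferentiableAt ℝ (calF f g) y → μ < deriv (calF f g) y) ∧
    (∀ y ∈ Gint g 1 \ Hg, DifferentiableAt ℝ (calG f g) y → μ < deriv (calG f g) y)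

/-- The ruination region `R_f = 𝓕⁻¹(Hg) ⊆ F₁`. -/
def Rf (f g : ℝ → ℝ) (Hg : Set ℝ) : Set ℝ :=
  {x | x ∈ Fint f 1 \ {f 1} ∧ calF f g x ∈ Hg}

/-- The ruination region `R_g = 𝓖⁻¹(Hf) ⊆ G₁`. -/
def Rg (f g : ℝ → ℝ) (Hf : Set ℝ) : Set ℝ :=
  {x | x ∈ Gint g 1 \ {g 0} ∧ calG f g x ∈ Hf}

/-- Castration property `Ca`: `W ⊆ int R_f ∪ int R_g`. -/
def Ca (f g : ℝ → ℝ) (Hf Hg : Set ℝ) : Prop :=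
  ovW f g ⊆ interior (Rf f g Hg) ∪ interior (Rg f g Hf)

/-- Membership in the class `𝒞` with the given holes `(Hf, Hg)`:
`(f,g) ∈ 𝒜` together with `So`, `Ho`, `Ee` and `Ca`. -/
def MemC (f g : ℝ → ℝ) (Hf Hg : Set ℝ) : Prop :=
  MemA f g ∧ So f g ∧ HoleAt f g Hf Hg ∧ Ee f g Hf Hg ∧ Ca f g Hf Hg

/-- The interval `I₋₁ = [0, 1/3 - ε]` of the appendix example. -/
def Im1 (ε : ℝ) : Set ℝ := Set.Icc 0 (1/3 - ε)

/-- The interval `I₀ = [1/3 + ε, 2/3 - ε]` of the appendix example. -/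
def Iz (ε : ℝ) : Set ℝ := Set.Icc (1/3 + ε) (2/3 - ε)

/-- The interval `I₁ = [2/3 + ε, 1]` of the appendix example. -/
def Ip1 (ε : ℝ) : Set ℝ := Set.Icc (2/3 + ε) 1

/-- The inclusion property of the appendix example. -/
def InclusionProp (f g : ℝ → ℝ) (ε : ℝ) : Prop :=
  f '' Im1 ε ⊆ Im1 ε ∧ f '' Iz ε ⊆ interior (Im1 ε) ∧ f '' Ip1 ε ⊆ interior (Iz ε) ∧
  g '' Ip1 ε ⊆ Ip1 ε ∧ g '' Iz ε ⊆ interior (Ip1 ε) ∧ g '' Im1 ε ⊆ interior (Iz ε)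

/-- The strong uniform contraction property of the appendix example. -/
def StrongContraction (f g : ℝ → ℝ) (ε lam : ℝ) : Prop :=
  ∀ x ∈ Im1 ε ∪ Iz ε ∪ Ip1 ε, deriv f x < lam ∧ deriv g x < lam

/-!
A point `y` of `W` lying in `R_f` has an explicit backward history under `f`: `f⁻¹ y` lies above
`f 1`, its successive `g`-preimages stay above `g (g 0)` until they land in the hole `H_g`, and
preimages of points of the holes lie in the holes.  Together with the holes this chain is a set
closed under taking preimages in `I` by `f` and `g` that misses `W`; likewise for `R_g`.  Hence
no point of `W` is mapped into `R_f ∩ R_g ⊆ W` by a nonempty word, whereas minimality would bring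
the orbit of `x ∈ J ∩ K` back into `J`.
-/

section

variable {f g : ℝ → ℝ} {Hf Hg : Set ℝ}

theorem zero_mem_unitI : (0 : ℝ) ∈ unitI := ⟨le_rfl, zero_le_one⟩

theorem one_mem_unitI : (1 : ℝ) ∈ unitI := ⟨zero_le_one, le_rfl⟩

theorem Fint_one : Fint f 1 = Icc (f (f 1)) (f 1) := by
  simp only [Fint, iterate_succ_apply', iterate_zero_apply]

theorem Gint_one : Gint g 1 = Icc (g 0) (g (g 0)) := by
  simp only [Gint, iterate_succ_apply', iterate_zero_apply]

theorem Rf_inter_Rg_subset_ovW : Rf f g Hg ∩ Rg f g Hf ⊆ ovW f g := by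
  rintro x ⟨⟨⟨hxF, -⟩, -⟩, ⟨hxG, -⟩, -⟩
  rw [Fint_one] at hxF
  rw [Gint_one] at hxG
  exact ⟨hxG.1, hxF.2⟩

theorem IsOpenInterval.isOpen {J : Set ℝ} (hJ : IsOpenInterval J) : IsOpen J := by
  obtain ⟨a, b, -, rfl⟩ := hJ
  exact isOpen_Ioo

theorem word_mapsTo (hf : MapsTo f unitI unitI) (hg : MapsTo g unitI unitI) :
    ∀ w : List Bool, MapsTo (word f g w) unitI unitI
  | [] => mapsTo_id _
  | true :: t => hf.comp (word_mapsTo hf hg t)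
  | false :: t => hg.comp (word_mapsTo hf hg t)

namespace MemA

theorem f_strictMonoOn (hA : MemA f g) : StrictMonoOn f unitI :=
  ContinuousOn.strictMonoOn_of_injOn_Icc zero_le_one
    (by rw [hA.f_zero]; exact (hA.f_maps one_mem_unitI).1) hA.f_c1.continuous.continuousOn hA.f_inj

theorem g_strictMonoOn (hA : MemA f g) : StrictMonoOn g unitI :=
  ContinuousOn.strictMonoOn_of_injOn_Icc zero_le_one
    (by rw [hA.g_one]; exact (hA.g_maps zero_mem_unitI).2) hA.g_c1.continuous.continuousOn hA.g_inj

theorem f_surjOn (hA : MemA f g) : SurjOn f unitI (Icc 0 (f 1)) := by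
  have h := intermediate_value_Icc zero_le_one hA.f_c1.continuous.continuousOn (f := f)
  rwa [hA.f_zero] at h

theorem g_surjOn (hA : MemA f g) : SurjOn g unitI (Icc (g 0) 1) := by
  have h := intermediate_value_Icc zero_le_one hA.g_c1.continuous.continuousOn (f := g)
  rwa [hA.g_one] at h

theorem image_f_subset (hA : MemA f g) : f '' unitI ⊆ Iic (f 1) := by
  rintro _ ⟨z, hz, rfl⟩
  exact hA.f_strictMonoOn.monotoneOn hz one_mem_unitI hz.2

theorem image_g_subset (hA : MemA f g) : g '' unitI ⊆ Ici (g 0) := by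
  rintro _ ⟨z, hz, rfl⟩
  exact hA.g_strictMonoOn.monotoneOn zero_mem_unitI hz hz.1

theorem ovW_subset_unitI (hA : MemA f g) : ovW f g ⊆ unitI :=
  Icc_subset_Icc (hA.g_maps zero_mem_unitI).1 (hA.f_maps one_mem_unitI).2

end MemA

namespace HoleAt

theorem Hf_subset (hH : HoleAt f g Hf Hg) : Hf ⊆ Ico (f (f 1)) (g 0) := by
  intro u hu
  obtain ⟨hu, huW⟩ := interior_subset (hH.2.2.1 hu)
  rw [Fint_one] at hu
  exact ⟨hu.1, lt_of_not_ge fun h => huW ⟨h, hu.2⟩⟩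

theorem Hg_subset (hH : HoleAt f g Hf Hg) : Hg ⊆ Ioc (f 1) (g (g 0)) := by
  intro u hu
  obtain ⟨hu, huW⟩ := interior_subset (hH.2.2.2.1 hu)
  rw [Gint_one] at hu
  exact ⟨lt_of_not_ge fun h => huW ⟨hu.1, h⟩, hu.2⟩

theorem disjoint_ovW (hH : HoleAt f g Hf Hg) : Disjoint (Hf ∪ Hg) (ovW f g) := by
  refine disjoint_union_left.2
    ⟨disjoint_left.2 fun u hu huW => ?_, disjoint_left.2 fun u hu huW => ?_⟩
  · exact (hH.Hf_subset hu).2.not_ge huW.1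
  · exact (hH.Hg_subset hu).1.not_ge huW.2

theorem Hf_subset_unitI (hA : MemA f g) (hH : HoleAt f g Hf Hg) : Hf ⊆ unitI := fun _ hu =>
  ⟨(hA.f_maps (hA.f_maps one_mem_unitI)).1.trans (hH.Hf_subset hu).1,
    (hH.Hf_subset hu).2.le.trans (hA.g_maps zero_mem_unitI).2⟩

theorem Hg_subset_unitI (hA : MemA f g) (hH : HoleAt f g Hf Hg) : Hg ⊆ unitI := fun _ hu =>
  ⟨(hA.f_maps one_mem_unitI).1.trans (hH.Hg_subset hu).1.le,
    (hH.Hg_subset hu).2.trans (hA.g_maps (hA.g_maps zero_mem_unitI)).2⟩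

end HoleAt

def PreimageClosed (h : ℝ → ℝ) (S : Set ℝ) : Prop :=
  ∀ z ∈ unitI, h z ∈ S → z ∈ S

theorem PreimageClosed.union_of_disjoint {p : ℝ → ℝ} {S T : Set ℝ} (hS : PreimageClosed p S)
    (hT : Disjoint T (p '' unitI)) : PreimageClosed p (S ∪ T) := by
  rintro z hz (h | h)
  · exact Or.inl (hS z hz h)
  · exact absurd (mem_image_of_mem p hz) (disjoint_left.1 hT h)

theorem PreimageClosed.union_iterate_invFunOn {q : ℝ → ℝ} {S : Set ℝ}
    (hS : PreimageClosed q S) (hq : InjOn q unitI) {u : ℝ} {N : ℕ}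
    (hN : (invFunOn q unitI)^[N] u ∈ S) :
    PreimageClosed q (S ∪ (fun j => (invFunOn q unitI)^[j] u) '' Iio N) := by
  rintro z hz (h | ⟨j, hj, hjz⟩)
  · exact Or.inl (hS z hz h)
  have hz_succ : (invFunOn q unitI)^[j + 1] u = z := by
    rw [iterate_succ_apply', show (invFunOn q unitI)^[j] u = q z from hjz,
      hq.leftInvOn_invFunOn hz]
  rcases (Nat.succ_le_of_lt hj).lt_or_eq with hlt | rfl
  · exact Or.inr ⟨j + 1, hlt, hz_succ⟩
  · exact Or.inl (hz_succ ▸ hN)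

theorem PreimageClosed.mem_of_word_mem (hf : MapsTo f unitI unitI) (hg : MapsTo g unitI unitI)
    {S : Set ℝ} (hSf : PreimageClosed f S) (hSg : PreimageClosed g S) :
    ∀ (w : List Bool) {z : ℝ}, z ∈ unitI → word f g w z ∈ S → z ∈ S
  | [], _, _, h => h
  | true :: t, _, hz, h =>
    hSf.mem_of_word_mem hf hg hSg t hz (hSf _ (word_mapsTo hf hg t hz) h)
  | false :: t, _, hz, h =>
    hSf.mem_of_word_mem hf hg hSg t hz (hSg _ (word_mapsTo hf hg t hz) h)

theorem HoleAt.preimageClosed_f (hA : MemA f g) (hH : HoleAt f g Hf Hg) :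
    PreimageClosed f (Hf ∪ Hg) := by
  rintro z hz (h | h)
  · rw [← hH.2.2.2.2.2] at h
    obtain ⟨u, hu, huz⟩ := h
    exact Or.inr (hA.f_inj (hH.Hg_subset_unitI hA hu) hz huz ▸ hu)
  · exact absurd (hA.image_f_subset (mem_image_of_mem f hz)) (hH.Hg_subset h).1.not_ge

theorem HoleAt.preimageClosed_g (hA : MemA f g) (hH : HoleAt f g Hf Hg) :
    PreimageClosed g (Hf ∪ Hg) := by
  rintro z hz (h | h)
  · exact absurd (hA.image_g_subset (mem_image_of_mem g hz)) (hH.Hf_subset h).2.not_ge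
  · rw [← hH.2.2.2.2.1] at h
    obtain ⟨u, hu, huz⟩ := h
    exact Or.inl (hA.g_inj (hH.Hf_subset_unitI hA hu) hz huz ▸ hu)

theorem iterate_invFunOn_g_mem_Ioc (hA : MemA f g) (hSo : So f g) {y : ℝ} (hy : y ∈ ovW f g)
    {N : ℕ} (hN : ∀ j < N, (invFunOn g unitI)^[j] (invFunOn f unitI y) ∉ Gint g 1) :
    ∀ j < N, (invFunOn g unitI)^[j] (invFunOn f unitI y) ∈ Ioc (g (g 0)) 1 := by
  set φ := invFunOn g unitI
  set z₀ := invFunOn f unitI y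
  have above_G1 :
      ∀ j < N, φ^[j] z₀ ∈ unitI → g 0 < φ^[j] z₀ → φ^[j] z₀ ∈ Ioc (g (g 0)) 1 :=
    fun j hj hI hlt => ⟨lt_of_not_ge fun h => hN j hj (Gint_one ▸ ⟨hlt.le, h⟩), hI.2⟩
  intro j
  induction j with
  | zero =>
    intro h0
    obtain ⟨hz₀, hfz₀⟩ :=
      invFunOn_pos (hA.f_surjOn ⟨(hA.g_maps zero_mem_unitI).1.trans hy.1, hy.2⟩)
    have hf1 : f 1 < z₀ := (hA.f_strictMonoOn.lt_iff_lt (hA.f_maps one_mem_unitI) hz₀).1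
      (by rw [hfz₀]; exact hSo.1.trans_le hy.1)
    exact above_G1 0 h0 hz₀ (hA.g0_lt_f1.trans hf1)
  | succ j ih =>
    intro hj
    obtain ⟨hlo, hhi⟩ := ih (Nat.lt_of_succ_lt hj)
    obtain ⟨hmem, hgφ⟩ :=
      invFunOn_pos (hA.g_surjOn ⟨(hA.g0_lt_f1.trans hSo.2).le.trans hlo.le, hhi⟩)
    refine above_G1 (j + 1) hj (by rwa [iterate_succ_apply']) ?_
    rw [iterate_succ_apply']
    exact (hA.g_strictMonoOn.lt_iff_lt (hA.g_maps zero_mem_unitI) hmem).1 (by rw [hgφ]; exact hlo)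

theorem iterate_invFunOn_f_mem_Ico (hA : MemA f g) (hSo : So f g) {y : ℝ} (hy : y ∈ ovW f g)
    {M : ℕ} (hM : ∀ j < M, (invFunOn f unitI)^[j] (invFunOn g unitI y) ∉ Fint f 1) :
    ∀ j < M, (invFunOn f unitI)^[j] (invFunOn g unitI y) ∈ Ico 0 (f (f 1)) := by
  set ψ := invFunOn f unitI
  set z₀ := invFunOn g unitI y
  have below_F1 :
      ∀ j < M, ψ^[j] z₀ ∈ unitI → ψ^[j] z₀ < f 1 → ψ^[j] z₀ ∈ Ico 0 (f (f 1)) :=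
    fun j hj hI hlt => ⟨hI.1, lt_of_not_ge fun h => hM j hj (Fint_one ▸ ⟨h, hlt.le⟩)⟩
  intro j
  induction j with
  | zero =>
    intro h0
    obtain ⟨hz₀, hgz₀⟩ :=
      invFunOn_pos (hA.g_surjOn ⟨hy.1, hy.2.trans (hA.f_maps one_mem_unitI).2⟩)
    have hg0 : z₀ < g 0 := (hA.g_strictMonoOn.lt_iff_lt hz₀ (hA.g_maps zero_mem_unitI)).1
      (by rw [hgz₀]; exact hy.2.trans_lt hSo.2)
    exact below_F1 0 h0 hz₀ (hg0.trans hA.g0_lt_f1)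
  | succ j ih =>
    intro hj
    obtain ⟨hlo, hhi⟩ := ih (Nat.lt_of_succ_lt hj)
    obtain ⟨hmem, hfψ⟩ :=
      invFunOn_pos (hA.f_surjOn ⟨hlo, hhi.le.trans (hSo.1.trans hA.g0_lt_f1).le⟩)
    refine below_F1 (j + 1) hj (by rwa [iterate_succ_apply']) ?_
    rw [iterate_succ_apply']
    exact (hA.f_strictMonoOn.lt_iff_lt hmem (hA.f_maps one_mem_unitI)).1 (by rw [hfψ]; exact hhi)

theorem exists_preimageClosed_of_mem_Rf (hA : MemA f g) (hSo : So f g) (hH : HoleAt f g Hf Hg)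
    {y : ℝ} (hyR : y ∈ Rf f g Hg) (hyW : y ∈ ovW f g) :
    ∃ S, PreimageClosed f S ∧ PreimageClosed g S ∧ Disjoint S (ovW f g) ∧
      invFunOn f unitI y ∈ S := by
  set Z : ℕ → ℝ := fun j => (invFunOn g unitI)^[j] (invFunOn f unitI y)
  set N := sInf {n | Z n ∈ Gint g 1}
  have hZN : Z N ∈ Hg := hyR.2
  have hchain : Z '' Iio N ⊆ Ioi (f 1) := image_subset_iff.2 fun j hj =>
    hSo.2.trans
      (iterate_invFunOn_g_mem_Ioc hA hSo hyW (fun j hj => Nat.notMem_of_lt_sInf hj) j hj).1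
  refine ⟨Hf ∪ Hg ∪ Z '' Iio N, ?_, ?_, ?_, ?_⟩
  · exact (hH.preimageClosed_f hA).union_of_disjoint
      (disjoint_of_subset hchain hA.image_f_subset (Iic_disjoint_Ioi le_rfl).symm)
  · exact (hH.preimageClosed_g hA).union_iterate_invFunOn hA.g_inj (Or.inr hZN)
  · refine disjoint_union_left.2 ⟨hH.disjoint_ovW, disjoint_left.2 fun z hz hzW => ?_⟩
    exact (hchain hz).not_ge hzW.2
  · rcases N.eq_zero_or_pos with hN | hN
    · rw [hN] at hZN
      exact Or.inl (Or.inr hZN)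
    · exact Or.inr ⟨0, hN, rfl⟩

theorem exists_preimageClosed_of_mem_Rg (hA : MemA f g) (hSo : So f g) (hH : HoleAt f g Hf Hg)
    {y : ℝ} (hyR : y ∈ Rg f g Hf) (hyW : y ∈ ovW f g) :
    ∃ S, PreimageClosed f S ∧ PreimageClosed g S ∧ Disjoint S (ovW f g) ∧
      invFunOn g unitI y ∈ S := by
  set Z : ℕ → ℝ := fun j => (invFunOn f unitI)^[j] (invFunOn g unitI y)
  set M := sInf {n | Z n ∈ Fint f 1}
  have hZM : Z M ∈ Hf := hyR.2
  have hchain : Z '' Iio M ⊆ Iio (g 0) := image_subset_iff.2 fun j hj =>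
    (iterate_invFunOn_f_mem_Ico hA hSo hyW (fun j hj => Nat.notMem_of_lt_sInf hj) j hj).2.trans
      hSo.1
  refine ⟨Hf ∪ Hg ∪ Z '' Iio M, ?_, ?_, ?_, ?_⟩
  · exact (hH.preimageClosed_f hA).union_iterate_invFunOn hA.f_inj (Or.inl hZM)
  · exact (hH.preimageClosed_g hA).union_of_disjoint
      (disjoint_of_subset hchain hA.image_g_subset (Iio_disjoint_Ici le_rfl))
  · refine disjoint_union_left.2 ⟨hH.disjoint_ovW, disjoint_left.2 fun z hz hzW => ?_⟩
    exact (hchain hz).not_ge hzW.1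
  · rcases M.eq_zero_or_pos with hM | hM
    · rw [hM] at hZM
      exact Or.inl (Or.inl hZM)
    · exact Or.inr ⟨0, hM, rfl⟩

theorem orbitP_disjoint_Rf_inter_Rg (hA : MemA f g) (hSo : So f g) (hH : HoleAt f g Hf Hg)
    {x : ℝ} (hx : x ∈ ovW f g) : Disjoint (orbitP f g x) (Rf f g Hg ∩ Rg f g Hf) := by
  rw [disjoint_left]
  rintro _ ⟨w, hw, rfl⟩ hy
  obtain ⟨b, t, rfl⟩ := List.exists_cons_of_ne_nil hw
  have hxI := hA.ovW_subset_unitI hx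
  have htx := word_mapsTo hA.f_maps hA.g_maps t hxI
  have hyW := Rf_inter_Rg_subset_ovW hy
  cases b
  · obtain ⟨S, hSf, hSg, hSW, hS⟩ := exists_preimageClosed_of_mem_Rg hA hSo hH hy.2 hyW
    rw [show word f g (false :: t) x = g (word f g t x) from rfl,
      hA.g_inj.leftInvOn_invFunOn htx] at hS
    exact disjoint_left.1 hSW (hSf.mem_of_word_mem hA.f_maps hA.g_maps hSg t hxI hS) hx
  · obtain ⟨S, hSf, hSg, hSW, hS⟩ := exists_preimageClosed_of_mem_Rf hA hSo hH hy.1 hyW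
    rw [show word f g (true :: t) x = f (word f g t x) from rfl,
      hA.f_inj.leftInvOn_invFunOn htx] at hS
    exact disjoint_left.1 hSW (hSf.mem_of_word_mem hA.f_maps hA.g_maps hSg t hxI hS) hx

end

/-- for `(f,g) ∈ 𝒞` with minimal set `K`, any nonempty open interval
`J ⊆ int (R_f ∩ R_g)` is disjoint from `K`. -/
theorem interval_in_double_ruination_misses_K (f g : ℝ → ℝ) (Hf Hg K J : Set ℝ)
    (hC : MemC f g Hf Hg) (hK : IsMinimalSet f g K)
    (hJ : IsOpenInterval J) (hJR : J ⊆ interior (Rf f g Hg ∩ Rg f g Hf)) :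
    J ∩ K = ∅ := by
  obtain ⟨hA, hSo, hH, -, -⟩ := hC
  rw [eq_empty_iff_forall_notMem]
  rintro x ⟨hxJ, hxK⟩
  have hx_closure : x ∈ closure (orbitP f g x) := (hK.2.2 x hxK).symm ▸ hxK
  obtain ⟨y, hyJ, hyx⟩ := mem_closure_iff.1 hx_closure J hJ.isOpen hxJ
  have hxW := Rf_inter_Rg_subset_ovW (interior_subset (hJR hxJ))
  exact disjoint_left.1 (orbitP_disjoint_Rf_inter_Rg hA hSo hH hxW) hyx (interior_subset (hJR hyJ))

end IFSPaper
end
end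

section
/- Fix ε∈(0,1/6), set I₋₁:=[0,1/3−ε], I₀:=[1/3+ε,2/3−ε], I₁:=[2/3+ε,1], and let (f,g) ∈ 𝒜 satisfy the inclusion property: f(I₋₁)⊆I₋₁, f(I₀)⊆int(I₋₁), f(I₁)⊆int(I₀), g(I₁)⊆I₁, g(I₀)⊆int(I₁), g(I₋₁)⊆int(I₀). Define Λ₀:=I₋₁∪I₀∪I₁, Λ_{k+1}:=f(Λ_k)∪g(Λ_k), and Λ:=⋂ₙΛₙ. Then Λ is a nonempty compact set, the orbit O₊(0) is contained in Λ, and hence the unique minimal set K of ⟨f,g⟩₊ satisfies K ⊆ Λ. -/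
open Set Function MeasureTheory

noncomputable section

namespace IFSPaper

/-!
Every `Λₙ` is compact and, since the inclusion property gives `Λ₁ ⊆ Λ₀`, the sequence is
decreasing; so `Λ` is compact, and it contains the fixed point `0` of `f` together with its
whole orbit. On the other hand `fⁿ x → 0` for every `x ∈ I`, because `0` is the only fixed point
of `f` in `I`; so `0` lies in every minimal set `K`, which is therefore the closure of `O₊(0)`,
a subset of the closed set `Λ`.
-/

open Filter Topology

theorem word_cons (f g : ℝ → ℝ) (b : Bool) (w : List Bool) (x : ℝ) :
    word f g (b :: w) x = (if b then f else g) (word f g w x) := rfl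

theorem word_replicate_true (f g : ℝ → ℝ) (n : ℕ) :
    word f g (List.replicate n true) = f^[n] := by
  induction n with
  | zero => rfl
  | succ n ih =>
    funext x
    rw [List.replicate_succ, word_cons, ih, if_pos rfl, iterate_succ_apply']

section Refinement

variable {f g : ℝ → ℝ} {Λ : ℕ → Set ℝ}

theorem antitone_of_succ_subset_zero (hΛs : ∀ k, Λ (k + 1) = f '' Λ k ∪ g '' Λ k)
    (h10 : Λ 1 ⊆ Λ 0) : Antitone Λ := by
  refine antitone_nat_of_succ_le fun n => ?_
  induction n with
  | zero => exact h10
  | succ n ih =>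
    rw [hΛs n, hΛs (n + 1)]
    exact union_subset_union (image_mono ih) (image_mono ih)

theorem isCompact_of_image_union (hΛs : ∀ k, Λ (k + 1) = f '' Λ k ∪ g '' Λ k)
    (hf : Continuous f) (hg : Continuous g) (h0 : IsCompact (Λ 0)) (n : ℕ) :
    IsCompact (Λ n) := by
  induction n with
  | zero => exact h0
  | succ n ih => rw [hΛs n]; exact (ih.image hf).union (ih.image hg)

theorem word_mem_of_image_union (hΛs : ∀ k, Λ (k + 1) = f '' Λ k ∪ g '' Λ k)
    {x : ℝ} {n : ℕ} (hx : x ∈ Λ n) (w : List Bool) : word f g w x ∈ Λ (w.length + n) := by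
  induction w with
  | nil => simpa [word] using hx
  | cons b w ih =>
    rw [word_cons, List.length_cons, Nat.add_right_comm, hΛs]
    cases b
    · exact Or.inr (mem_image_of_mem g ih)
    · exact Or.inl (mem_image_of_mem f ih)

theorem mem_of_isFixedPt (hΛs : ∀ k, Λ (k + 1) = f '' Λ k ∪ g '' Λ k) {p : ℝ}
    (hp : IsFixedPt f p) (h0 : p ∈ Λ 0) (n : ℕ) : p ∈ Λ n := by
  induction n with
  | zero => exact h0
  | succ n ih => rw [hΛs n]; exact Or.inl ⟨p, ih, hp⟩

theorem orbitP_subset_iInter (hΛs : ∀ k, Λ (k + 1) = f '' Λ k ∪ g '' Λ k)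
    (hanti : Antitone Λ) {x : ℝ} (hx : x ∈ ⋂ n, Λ n) : orbitP f g x ⊆ ⋂ n, Λ n := by
  rintro _ ⟨w, -, rfl⟩
  refine mem_iInter.2 fun n => hanti (Nat.le_add_left n w.length) ?_
  exact word_mem_of_image_union hΛs (mem_iInter.1 hx n) w

end Refinement

namespace MemA

variable {f g : ℝ → ℝ} (hA : MemA f g)
include hA

theorem f_le_self {y : ℝ} (hy : y ∈ unitI) : f y ≤ y := by
  obtain ⟨hy0, hy1⟩ := hy
  rcases hy0.eq_or_lt with rfl | hy0
  · exact hA.f_zero.le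
  rcases hy1.eq_or_lt with rfl | hy1
  · exact hA.f1_lt_one.le
  · exact (hA.f_lt_id y ⟨hy0, hy1⟩).le

theorem eq_zero_of_isFixedPt {y : ℝ} (hy : y ∈ unitI) (hfix : IsFixedPt f y) : y = 0 := by
  obtain ⟨hy0, hy1⟩ := hy
  rcases hy0.eq_or_lt with rfl | hy0
  · rfl
  rcases hy1.eq_or_lt with rfl | hy1
  · exact absurd hfix hA.f1_lt_one.ne
  · exact absurd hfix (hA.f_lt_id y ⟨hy0, hy1⟩).ne

theorem tendsto_iterate_f {x : ℝ} (hx : x ∈ unitI) :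
    Tendsto (fun n => f^[n] x) atTop (𝓝 0) := by
  have hmem : ∀ n, f^[n] x ∈ unitI := fun n => hA.f_maps.iterate n hx
  have hanti : Antitone fun n => f^[n] x := antitone_nat_of_succ_le fun n => by
    rw [iterate_succ_apply']
    exact hA.f_le_self (hmem n)
  have hlim := tendsto_atTop_ciInf hanti ⟨0, by rintro _ ⟨n, rfl⟩; exact (hmem n).1⟩
  have hfix := isFixedPt_of_tendsto_iterate hlim hA.f_c1.continuous.continuousAt
  rwa [hA.eq_zero_of_isFixedPt (isClosed_Icc.mem_of_tendsto hlim (.of_forall hmem)) hfix]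
    at hlim

theorem zero_mem_closure_orbitP {x : ℝ} (hx : x ∈ unitI) : (0 : ℝ) ∈ closure (orbitP f g x) := by
  refine mem_closure_of_tendsto ((hA.tendsto_iterate_f hx).comp (tendsto_add_atTop_nat 1))
    (.of_forall fun n => ?_)
  exact ⟨List.replicate (n + 1) true, by simp, by rw [word_replicate_true]; rfl⟩

theorem eq_closure_orbitP_zero {K : Set ℝ} (hK : IsMinimalSet f g K) :
    K = closure (orbitP f g 0) := by
  obtain ⟨⟨x, hx⟩, hKI, hmin⟩ := hK
  have h0 : (0 : ℝ) ∈ K := hmin x hx ▸ hA.zero_mem_closure_orbitP (hKI hx)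
  exact (hmin 0 h0).symm

end MemA

theorem InclusionProp.image_union_subset {f g : ℝ → ℝ} {ε : ℝ} (hinc : InclusionProp f g ε) :
    f '' (Im1 ε ∪ Iz ε ∪ Ip1 ε) ∪ g '' (Im1 ε ∪ Iz ε ∪ Ip1 ε) ⊆ Im1 ε ∪ Iz ε ∪ Ip1 ε := by
  obtain ⟨hfm, hfz, hfp, hgp, hgz, hgm⟩ := hinc
  have hm : Im1 ε ⊆ Im1 ε ∪ Iz ε ∪ Ip1 ε := subset_union_left.trans subset_union_left
  have hz : Iz ε ⊆ Im1 ε ∪ Iz ε ∪ Ip1 ε := subset_union_right.trans subset_union_left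
  have hp : Ip1 ε ⊆ Im1 ε ∪ Iz ε ∪ Ip1 ε := subset_union_right
  simp only [image_union, union_subset_iff]
  exact ⟨⟨⟨hfm.trans hm, (hfz.trans interior_subset).trans hm⟩,
      (hfp.trans interior_subset).trans hz⟩,
    ⟨⟨(hgm.trans interior_subset).trans hz, (hgz.trans interior_subset).trans hp⟩, hgp.trans hp⟩⟩

theorem appendix_minimal_set_in_Lambda_general (ε : ℝ)
    (hε : ε < 1/6)
    (f g : ℝ → ℝ) (hA : MemA f g) (hinc : InclusionProp f g ε)
    (Λ : ℕ → Set ℝ)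
    (hΛ0 : Λ 0 = Im1 ε ∪ Iz ε ∪ Ip1 ε)
    (hΛs : ∀ k : ℕ, Λ (k + 1) = f '' Λ k ∪ g '' Λ k) :
    (⋂ n : ℕ, Λ n).Nonempty ∧ IsCompact (⋂ n : ℕ, Λ n) ∧
    orbitP f g 0 ⊆ ⋂ n : ℕ, Λ n ∧
    ∀ K : Set ℝ, IsMinimalSet f g K → K ⊆ ⋂ n : ℕ, Λ n := by
  have hanti : Antitone Λ :=
    antitone_of_succ_subset_zero hΛs (by rw [hΛs 0, hΛ0]; exact hinc.image_union_subset)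
  have hcompact : ∀ n, IsCompact (Λ n) :=
    isCompact_of_image_union hΛs hA.f_c1.continuous hA.g_c1.continuous
      (by rw [hΛ0]; exact (isCompact_Icc.union isCompact_Icc).union isCompact_Icc)
  have hclosed : IsClosed (⋂ n, Λ n) := isClosed_iInter fun n => (hcompact n).isClosed
  have hzero : (0 : ℝ) ∈ ⋂ n, Λ n := mem_iInter.2 <|
    mem_of_isFixedPt hΛs hA.f_zero (by rw [hΛ0]; exact Or.inl (Or.inl ⟨le_rfl, by linarith⟩))
  have horbit := orbitP_subset_iInter hΛs hanti hzero
  refine ⟨⟨0, hzero⟩, (hcompact 0).of_isClosed_subset hclosed (iInter_subset Λ 0), horbit,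
    fun K hK => ?_⟩
  rw [hA.eq_closure_orbitP_zero hK]
  exact hclosed.closure_subset_iff.2 horbit

/-- appendix example: under the inclusion property, `Λ = ⋂ₙ Λₙ` is a
nonempty compact set, `O₊(0) ⊆ Λ`, and hence the minimal set `K` satisfies `K ⊆ Λ`. -/
theorem appendix_minimal_set_in_Lambda (ε : ℝ)
    (hε0 : 0 < ε) (hε : ε < 1/6)
    (f g : ℝ → ℝ) (hA : MemA f g) (hinc : InclusionProp f g ε)
    (Λ : ℕ → Set ℝ)
    (hΛ0 : Λ 0 = Im1 ε ∪ Iz ε ∪ Ip1 ε)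
    (hΛs : ∀ k : ℕ, Λ (k + 1) = f '' Λ k ∪ g '' Λ k) :
    (⋂ n : ℕ, Λ n).Nonempty ∧ IsCompact (⋂ n : ℕ, Λ n) ∧
    orbitP f g 0 ⊆ ⋂ n : ℕ, Λ n ∧
    ∀ K : Set ℝ, IsMinimalSet f g K → K ⊆ ⋂ n : ℕ, Λ n :=
  appendix_minimal_set_in_Lambda_general ε hε f g hA hinc Λ hΛ0 hΛs

end IFSPaper
end
end

section
/- Let (f,g) ∈ 𝒜 and let K be the unique minimal set of ⟨f,g⟩₊. Then K is a compact perfect set: K is closed in I and has no isolated points. -/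
/-!
Since `K` is the closure of each of its orbits, it is closed in `[0,1]`, and every word in `f, g`
maps `K` into itself. The minimum of `K` is then not moved down by `f`, so it is `0`; likewise
the maximum is `1`. The point `1` is not isolated in `K`: otherwise the largest point of `K`
below `1` would be pushed by `g` to a point of `K` strictly between it and `1`. Finally a point
of `K = closure (O₊ 1)` either accumulates on `O₊ 1`, or is `φ 1` for a word `φ`, a continuous
injective self-map of `K` that carries the accumulation point `1` to an accumulation point.
-/

open Set Function MeasureTheory

noncomputable section

open Filter Topology

theorem AccPt.image_of_injOn {X Y : Type*} [TopologicalSpace X] [TopologicalSpace Y]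
    {φ : X → Y} {C : Set X} {x : X} (h : AccPt x (𝓟 C)) (hφ : ContinuousAt φ x)
    (hinj : InjOn φ C) (hx : x ∈ C) : AccPt (φ x) (𝓟 (φ '' C)) := by
  rw [accPt_principal_iff_nhdsWithin] at h ⊢
  have hmaps : MapsTo φ (C \ {x}) (φ '' C \ {φ x}) := fun y ⟨hyC, hyx⟩ =>
    ⟨mem_image_of_mem φ hyC, fun hφy => hyx (hinj hyC hx hφy)⟩
  exact (tendsto_nhdsWithin_of_tendsto_nhds_of_eventually_within φ
    hφ.continuousWithinAt (eventually_mem_nhdsWithin.mono hmaps)).neBot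

theorem IsCompact.exists_le_apply_of_mapsTo {α : Type*} [ConditionallyCompleteLinearOrder α]
    [TopologicalSpace α] [OrderTopology α] {K : Set α} {h : α → α} (hK : IsCompact K)
    (hne : K.Nonempty) (hh : MapsTo h K K) : ∃ x ∈ K, x ≤ h x :=
  ⟨sInf K, hK.sInf_mem hne, csInf_le hK.bddBelow (hh (hK.sInf_mem hne))⟩

theorem IsCompact.exists_apply_le_of_mapsTo {α : Type*} [ConditionallyCompleteLinearOrder α]
    [TopologicalSpace α] [OrderTopology α] {K : Set α} {h : α → α} (hK : IsCompact K)
    (hne : K.Nonempty) (hh : MapsTo h K K) : ∃ x ∈ K, h x ≤ x :=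
  ⟨sSup K, hK.sSup_mem hne, le_csSup hK.bddAbove (hh (hK.sSup_mem hne))⟩

namespace IFSPaper

variable {f g : ℝ → ℝ} {K : Set ℝ}

namespace MemA

variable (hA : MemA f g)
include hA

theorem f_lt_self {x : ℝ} (hx : x ∈ Ioc 0 1) : f x < x := by
  rcases hx.2.lt_or_eq with hx1 | rfl
  · exact hA.f_lt_id x ⟨hx.1, hx1⟩
  · exact hA.f1_lt_one

theorem lt_g_self {x : ℝ} (hx : x ∈ Ico 0 1) : x < g x := by
  rcases hx.1.lt_or_eq with hx0 | rfl
  · exact hA.id_lt_g x ⟨hx0, hx.2⟩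
  · exact hA.g0_pos

theorem g_lt_one {x : ℝ} (hx : x ∈ unitI) (hx1 : x < 1) : g x < 1 :=
  (hA.g_maps hx).2.lt_of_ne fun hgx =>
    hx1.ne (hA.g_inj hx ⟨zero_le_one, le_rfl⟩ (hgx.trans hA.g_one.symm))

theorem mapsTo_word (w : List Bool) : MapsTo (word f g w) unitI unitI := by
  induction w with
  | nil => exact mapsTo_id _
  | cons b t ih =>
    cases b
    · exact hA.g_maps.comp ih
    · exact hA.f_maps.comp ih

theorem continuous_word (w : List Bool) : Continuous (word f g w) := by
  induction w with
  | nil => exact continuous_id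
  | cons b t ih =>
    cases b
    · exact hA.g_c1.continuous.comp ih
    · exact hA.f_c1.continuous.comp ih

theorem injOn_word (w : List Bool) : InjOn (word f g w) unitI := by
  induction w with
  | nil => exact injOn_id _
  | cons b t ih =>
    cases b
    · exact hA.g_inj.comp ih (hA.mapsTo_word t)
    · exact hA.f_inj.comp ih (hA.mapsTo_word t)

end MemA

namespace IsMinimalSet

variable (hK : IsMinimalSet f g K)
include hK

theorem isClosed : IsClosed K := by
  obtain ⟨x, hx⟩ := hK.1
  rw [← hK.2.2 x hx]
  exact isClosed_closure

theorem isCompact : IsCompact K :=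
  isCompact_Icc.of_isClosed_subset hK.isClosed hK.2.1

theorem orbitP_subset {x : ℝ} (hx : x ∈ K) : orbitP f g x ⊆ K :=
  hK.2.2 x hx ▸ subset_closure

theorem mapsTo_word (w : List Bool) : MapsTo (word f g w) K K := by
  rcases w with _ | ⟨b, t⟩
  · exact mapsTo_id K
  · exact fun x hx => hK.orbitP_subset hx ⟨b :: t, List.cons_ne_nil b t, rfl⟩

theorem zero_mem (hA : MemA f g) : (0 : ℝ) ∈ K := by
  obtain ⟨x, hxK, hx⟩ :=
    hK.isCompact.exists_le_apply_of_mapsTo hK.1 (hK.mapsTo_word [true])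
  rcases (hK.2.1 hxK).1.eq_or_lt with rfl | hx0
  · exact hxK
  · exact absurd hx (hA.f_lt_self ⟨hx0, (hK.2.1 hxK).2⟩).not_ge

theorem one_mem (hA : MemA f g) : (1 : ℝ) ∈ K := by
  obtain ⟨x, hxK, hx⟩ :=
    hK.isCompact.exists_apply_le_of_mapsTo hK.1 (hK.mapsTo_word [false])
  rcases (hK.2.1 hxK).2.eq_or_lt with rfl | hx1
  · exact hxK
  · exact absurd hx (hA.lt_g_self ⟨(hK.2.1 hxK).1, hx1⟩).not_ge

theorem accPt_one (hA : MemA f g) : AccPt 1 (𝓟 K) := by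
  rw [accPt_iff_nhds]
  by_contra! hacc
  obtain ⟨U, hU, hUK⟩ := hacc
  obtain ⟨a, ha, haU⟩ := exists_Ioc_subset_of_mem_nhds' hU zero_lt_one
  -- `hUK` and `haU` say that `K ∩ (a, 1) = ∅`
  have hmaps : MapsTo g (K ∩ Iic a) (K ∩ Iic a) := fun x ⟨hxK, hxa⟩ => by
    have hgK : g x ∈ K := hK.mapsTo_word [false] hxK
    have hg1 : g x < 1 := hA.g_lt_one (hK.2.1 hxK) (hxa.trans_lt ha.2)
    exact ⟨hgK, not_lt.1 fun hag => hg1.ne (hUK _ ⟨haU ⟨hag, hg1.le⟩, hgK⟩)⟩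
  obtain ⟨x, ⟨hxK, hxa⟩, hgx⟩ :=
    (hK.isCompact.inter_right isClosed_Iic).exists_apply_le_of_mapsTo
      ⟨0, hK.zero_mem hA, ha.1⟩ hmaps
  exact hgx.not_gt (hA.lt_g_self ⟨(hK.2.1 hxK).1, hxa.trans_lt ha.2⟩)

theorem preperfect (hA : MemA f g) : Preperfect K := by
  intro x hx
  have h1 : (1 : ℝ) ∈ K := hK.one_mem hA
  rw [← hK.2.2 1 h1, closure_eq_self_union_derivedSet] at hx
  rcases hx with ⟨w, -, rfl⟩ | hacc
  · exact ((hK.accPt_one hA).image_of_injOn (hA.continuous_word w).continuousAt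
      ((hA.injOn_word w).mono hK.2.1) h1).mono (principal_mono.2 (hK.mapsTo_word w).image_subset)
  · exact hacc.mono (principal_mono.2 (hK.orbitP_subset h1))

end IsMinimalSet

/-- for `(f,g) ∈ 𝒜`, the minimal set `K` is a compact perfect set:
it is closed (in `I`, equivalently in `ℝ`) and has no isolated points. -/
theorem minimal_set_compact_perfect (f g : ℝ → ℝ) (K : Set ℝ)
    (hA : MemA f g) (hK : IsMinimalSet f g K) :
    IsCompact K ∧ Perfect K :=
  ⟨hK.isCompact, hK.isClosed, hK.preperfect hA⟩

end IFSPaper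
end
end
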